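/- arXiv:2001.10405 — 4 statements merged into one kernel-verified Lean document; each statement's English description precedes it below -/
import Mathlib

section
/- (Characterization of ⊑_C on joins of atoms.) Let A and B be nonempty finite sets of atoms, and let l = ⋁_{a ∈ A} a and l' = ⋁_{b ∈ B} b be the iterated joins over any enumerations of A and B. Then l ⊑_C l' if and only if A ⊆ B. -/
/-- Simple labels: generated by http(d), https(d), join (∨) and meet (∧). -/
inductive SL (D : Type*) : Type _ where
  | http : D → SL D
  | https : D → SL D
  | join : SL D → SL D → SL D
  | meet : SL D → SL D → SL D

/-- The confidentiality pre-order ⊑_C: the smallest reflexive, transitive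
relation closed under the four rules. -/
inductive Cleq {D : Type*} : SL D → SL D → Prop where
  | refl (l : SL D) : Cleq l l
  | trans {l₁ l₂ l₃ : SL D} : Cleq l₁ l₂ → Cleq l₂ l₃ → Cleq l₁ l₃
  | joinLeft (l₁ l₂ : SL D) : Cleq l₁ (SL.join l₁ l₂)
  | joinRight (l₁ l₂ : SL D) : Cleq l₂ (SL.join l₁ l₂)
  | meetLeft (l₁ l₂ : SL D) : Cleq (SL.meet l₁ l₂) l₁
  | meetRight (l₁ l₂ : SL D) : Cleq (SL.meet l₁ l₂) l₂
  | joinLub {l₁ l₂ l₃ : SL D} : Cleq l₁ l₃ → Cleq l₂ l₃ → Cleq (SL.join l₁ l₂) l₃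
  | meetGlb {l₁ l₂ l₃ : SL D} : Cleq l₁ l₂ → Cleq l₁ l₃ → Cleq l₁ (SL.meet l₂ l₃)

/-- The equivalence ≈ induced by the pre-order ⊑_C. -/
def Ceq {D : Type*} (l l' : SL D) : Prop := Cleq l l' ∧ Cleq l' l

/-- The integrity pre-order ⊑_I, contra-variant to ⊑_C. -/
def Ileq {D : Type*} (l l' : SL D) : Prop := Cleq l' l

/-- Iterated join over a nonempty list of labels (head plus tail). -/
def joinList {D : Type*} : SL D → List (SL D) → SL D
  | a, [] => a
  | a, b :: bs => SL.join a (joinList b bs)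

/-- Iterated meet over a nonempty list of labels (head plus tail). -/
def meetList {D : Type*} : SL D → List (SL D) → SL D
  | a, [] => a
  | a, b :: bs => SL.meet a (meetList b bs)

/-- Iterated join of `f` over the nonempty enumeration `d :: ds`. -/
def bigJoin {D : Type*} (f : D → SL D) (d : D) (ds : List D) : SL D :=
  joinList (f d) (ds.map f)

/-- Iterated meet of `f` over the nonempty enumeration `d :: ds`. -/
def bigMeet {D : Type*} (f : D → SL D) (d : D) (ds : List D) : SL D :=
  meetList (f d) (ds.map f)

/-- A simple label is an atom if it is of the form http(d) or https(d). -/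
def IsAtomSL {D : Type*} : SL D → Prop
  | SL.http _ => True
  | SL.https _ => True
  | SL.join _ _ => False
  | SL.meet _ _ => False

/-- Boolean-style semantics parameterized by a valuation on atoms. -/
def evalSL {D : Type*} (v : SL D → Prop) : SL D → Prop
  | SL.http d => v (SL.http d)
  | SL.https d => v (SL.https d)
  | SL.join l₁ l₂ => evalSL v l₁ ∨ evalSL v l₂
  | SL.meet l₁ l₂ => evalSL v l₁ ∧ evalSL v l₂

lemma evalSL_atom {D : Type*} (v : SL D → Prop) {x : SL D} (hx : IsAtomSL x) :
    evalSL v x ↔ v x := by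
  cases x <;> simp [evalSL, IsAtomSL] at hx ⊢

lemma evalSL_sound {D : Type*} (v : SL D → Prop) {l l' : SL D}
    (h : Cleq l l') : evalSL v l → evalSL v l' := by
  induction h with
  | refl => exact id
  | trans _ _ ih1 ih2 => exact fun h => ih2 (ih1 h)
  | joinLeft => exact Or.inl
  | joinRight => exact Or.inr
  | meetLeft => exact And.left
  | meetRight => exact And.right
  | joinLub _ _ ih1 ih2 => exact fun h => h.elim ih1 ih2
  | meetGlb _ _ ih1 ih2 => exact fun h => ⟨ih1 h, ih2 h⟩

lemma evalSL_joinList {D : Type*} (v : SL D → Prop) (a : SL D) (as : List (SL D)) :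
    evalSL v (joinList a as) ↔ ∃ y ∈ a :: as, evalSL v y := by
  induction as generalizing a with
  | nil => simp [joinList]
  | cons c cs ih =>
    simp only [joinList, evalSL, ih, List.mem_cons]
    constructor
    · rintro (h | ⟨y, hy, h⟩)
      · exact ⟨a, Or.inl rfl, h⟩
      · exact ⟨y, Or.inr hy, h⟩
    · rintro ⟨y, (rfl | hy), h⟩
      · exact Or.inl h
      · exact Or.inr ⟨y, hy, h⟩

lemma mem_cleq_joinList {D : Type*} {x a : SL D} {as : List (SL D)}
    (hx : x ∈ a :: as) : Cleq x (joinList a as) := by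
  induction as generalizing a with
  | nil => simp at hx; subst hx; exact Cleq.refl _
  | cons c cs ih =>
    rcases List.mem_cons.1 hx with rfl | hx
    · exact Cleq.joinLeft _ _
    · exact Cleq.trans (ih hx) (Cleq.joinRight _ _)

lemma joinList_cleq {D : Type*} {a : SL D} {as : List (SL D)} {m : SL D}
    (h : ∀ x ∈ a :: as, Cleq x m) : Cleq (joinList a as) m := by
  induction as generalizing a with
  | nil => exact h a (by simp)
  | cons c cs ih =>
    exact Cleq.joinLub (h a (by simp))
      (ih fun x hx => h x (List.mem_cons_of_mem _ hx))

/-- Characterization of ⊑_C on joins of atoms: for nonempty finite sets A, B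
of atoms, the iterated join over (any enumeration of) A is below the iterated
join over (any enumeration of) B iff A ⊆ B. -/
theorem join_of_atoms_le_iff {D : Type*} (A B : Finset (SL D))
    (hA : ∀ x ∈ A, IsAtomSL x) (hB : ∀ x ∈ B, IsAtomSL x)
    (a : SL D) (as : List (SL D)) (b : SL D) (bs : List (SL D))
    (henumA : ∀ x : SL D, x ∈ a :: as ↔ x ∈ A)
    (henumB : ∀ x : SL D, x ∈ b :: bs ↔ x ∈ B) :
    Cleq (joinList a as) (joinList b bs) ↔ A ⊆ B := by
  constructor
  · intro h x hxA
    have hx : x ∈ a :: as := (henumA x).2 hxA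
    set v : SL D → Prop := fun y => y = x with hv
    have hxatom : IsAtomSL x := hA x hxA
    have h1 : evalSL v (joinList a as) :=
      (evalSL_joinList v a as).2 ⟨x, hx, (evalSL_atom v hxatom).2 rfl⟩
    have h2 := evalSL_sound v h h1
    obtain ⟨y, hy, hey⟩ := (evalSL_joinList v b bs).1 h2
    have hyB : y ∈ B := (henumB y).1 hy
    have : y = x := (evalSL_atom v (hB y hyB)).1 hey
    exact this ▸ hyB
  · intro hAB
    refine joinList_cleq fun x hx => ?_
    exact mem_cleq_joinList ((henumB x).2 (hAB ((henumA x).1 hx)))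
end

section
/- (The __Secure- prefix strictly improves cookie integrity over the Secure attribute.) Let R ⊆ 𝒟 be a nonempty finite set (the related domains of a domain d, with d ∈ R), and define L_sec = ⋁_{d' ∈ R} (http(d') ∨ https(d')) (the integrity component of a Secure cookie for d) and L_pref = ⋁_{d' ∈ R} https(d') (the integrity component of a __Secure- prefix cookie for d). Then L_pref ⊑_C L_sec but ¬(L_sec ⊑_C L_pref); equivalently, by contravariance of ⊑_I, L_sec ⊑_I L_pref holds while L_pref ⊑_I L_sec fails. -/
/-- Semantic interpretation into `Bool`: http ↦ true, https ↦ false. -/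
def semB {D : Type*} : SL D → Bool
  | SL.http _ => true
  | SL.https _ => false
  | SL.join a b => semB a || semB b
  | SL.meet a b => semB a && semB b

lemma semB_mono {D : Type*} {l l' : SL D} (h : Cleq l l') :
    semB l = true → semB l' = true := by
  induction h with
  | refl => exact id
  | trans _ _ ih1 ih2 => exact fun h => ih2 (ih1 h)
  | joinLeft => simp [semB]; try tauto
  | joinRight => simp [semB]; try tauto
  | meetLeft => simp [semB]; try tauto
  | meetRight => simp [semB]; try tauto
  | joinLub _ _ ih1 ih2 => simp [semB]; rintro (h | h); exacts [ih1 h, ih2 h]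
  | meetGlb _ _ ih1 ih2 => simp [semB]; exact fun h => ⟨ih1 h, ih2 h⟩

lemma semB_bigJoin_https {D : Type*} (e : D) (es : List D) :
    semB (bigJoin SL.https e es) = false := by
  induction es generalizing e with
  | nil => rfl
  | cons x xs ih => simpa [bigJoin, joinList, semB] using ih x

lemma joinList_mono {D : Type*} (f g : D → SL D) (h : ∀ x, Cleq (f x) (g x)) :
    ∀ (es : List D) (e : D), Cleq (bigJoin f e es) (bigJoin g e es) := by
  intro es
  induction es with
  | nil => exact fun e => h e
  | cons x xs ih =>
      intro e
      exact Cleq.joinLub (Cleq.trans (h e) (Cleq.joinLeft _ _))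
        (Cleq.trans (ih x) (Cleq.joinRight _ _))

lemma head_le_bigJoin {D : Type*} (f : D → SL D) (e : D) (es : List D) :
    Cleq (f e) (bigJoin f e es) := by
  cases es with
  | nil => exact Cleq.refl _
  | cons x xs => exact Cleq.joinLeft _ _

/-- The __Secure- prefix strictly improves cookie integrity over the Secure
attribute: L_pref ⊑_C L_sec but ¬(L_sec ⊑_C L_pref); equivalently,
L_sec ⊑_I L_pref holds while L_pref ⊑_I L_sec fails. -/
theorem secure_prefix_strictly_better {D : Type*}
    (R : Finset D) (d : D) (hd : d ∈ R)
    (e : D) (es : List D) (henum : ∀ x : D, x ∈ e :: es ↔ x ∈ R) :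
    Cleq (bigJoin SL.https e es)
         (bigJoin (fun d' => SL.join (SL.http d') (SL.https d')) e es) ∧
    ¬ Cleq (bigJoin (fun d' => SL.join (SL.http d') (SL.https d')) e es)
           (bigJoin SL.https e es) ∧
    Ileq (bigJoin (fun d' => SL.join (SL.http d') (SL.https d')) e es)
         (bigJoin SL.https e es) ∧
    ¬ Ileq (bigJoin SL.https e es)
           (bigJoin (fun d' => SL.join (SL.http d') (SL.https d')) e es) := by
  have hpos : Cleq (bigJoin SL.https e es)
      (bigJoin (fun d' => SL.join (SL.http d') (SL.https d')) e es) :=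
    joinList_mono _ _ (fun x => Cleq.joinRight _ _) es e
  have hneg : ¬ Cleq (bigJoin (fun d' => SL.join (SL.http d') (SL.https d')) e es)
      (bigJoin SL.https e es) := by
    intro h
    have h1 : Cleq (SL.http e) (bigJoin SL.https e es) :=
      Cleq.trans (Cleq.trans (Cleq.joinLeft _ _)
        (head_le_bigJoin (fun d' => SL.join (SL.http d') (SL.https d')) e es)) h
    have := semB_mono h1 rfl
    rw [semB_bigJoin_https] at this
    exact Bool.false_ne_true this
  exact ⟨hpos, hneg, hpos, hneg⟩
end

section
/- (The __Host- prefix strictly improves cookie integrity over the __Secure- prefix in the presence of related domains.) Let R ⊆ 𝒟 be a nonempty finite set with d ∈ R, and define L_pref = ⋁_{d' ∈ R} https(d') (the integrity component of a __Secure- prefix cookie for d) and L_host = https(d) (the integrity component of a __Host- prefix cookie for d). Then L_host ⊑_C L_pref; moreover, if there exists d' ∈ R with d' ≠ d, then ¬(L_pref ⊑_C L_host). Equivalently, by contravariance of ⊑_I, L_pref ⊑_I L_host always holds, and it is strict whenever d has a related domain distinct from itself. -/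
/-!
Every lattice-valued interpretation of the atoms extends to labels and is monotone along `⊑_C`,
since the rules defining `⊑_C` are lattice laws. Interpreting labels in `Prop` with `https(x)` read
as `x = a` shows that `https(a) ⊑_C https(b)` forces `a = b`. Hence a join over `R` lies above
`https(d)` for `d ∈ R`, but lies below it only if every member of `R` is `d`.
-/

namespace SL

variable {D α : Type*}

def interp [Lattice α] (h s : D → α) : SL D → α
  | http x => h x
  | https x => s x
  | join a b => interp h s a ⊔ interp h s b
  | meet a b => interp h s a ⊓ interp h s b

end SL

namespace Cleq

variable {D α : Type*}

theorem interp_le [Lattice α] (h s : D → α) {l l' : SL D} (hle : Cleq l l') :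
    l.interp h s ≤ l'.interp h s := by
  induction hle with
  | refl _ => exact le_rfl
  | trans _ _ ih₁ ih₂ => exact ih₁.trans ih₂
  | joinLeft _ _ => exact le_sup_left
  | joinRight _ _ => exact le_sup_right
  | meetLeft _ _ => exact inf_le_left
  | meetRight _ _ => exact inf_le_right
  | joinLub _ _ ih₁ ih₂ => exact sup_le ih₁ ih₂
  | meetGlb _ _ ih₁ ih₂ => exact le_inf ih₁ ih₂

theorem le_joinList {a b : SL D} {bs : List (SL D)} (ha : a ∈ b :: bs) :
    Cleq a (joinList b bs) := by
  induction bs generalizing b with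
  | nil => exact List.mem_singleton.mp ha ▸ refl a
  | cons c cs ih =>
    rcases List.mem_cons.mp ha with rfl | ha
    · exact joinLeft a _
    · exact (ih ha).trans (joinRight b _)

theorem le_bigJoin (f : D → SL D) {x d : D} {ds : List D} (hx : x ∈ d :: ds) :
    Cleq (f x) (bigJoin f d ds) :=
  le_joinList (List.mem_map_of_mem (f := f) hx)

theorem https_https_iff {a b : D} : Cleq (SL.https a) (SL.https b) ↔ a = b := by
  refine ⟨fun hab => ?_, fun hab => hab ▸ refl _⟩
  exact (interp_le (fun _ => False) (· = a) hab rfl).symm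

end Cleq

/-- The __Host- prefix strictly improves cookie integrity over the __Secure-
prefix in the presence of related domains: L_host ⊑_C L_pref always, and if d
has a related domain distinct from itself then ¬(L_pref ⊑_C L_host);
equivalently, L_pref ⊑_I L_host always, strictly in the latter case. -/
theorem host_prefix_strictly_better {D : Type*}
    (R : Finset D) (d : D) (hd : d ∈ R)
    (e : D) (es : List D) (henum : ∀ x : D, x ∈ e :: es ↔ x ∈ R) :
    Cleq (SL.https d) (bigJoin SL.https e es) ∧
    ((∃ d' ∈ R, d' ≠ d) → ¬ Cleq (bigJoin SL.https e es) (SL.https d)) ∧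
    Ileq (bigJoin SL.https e es) (SL.https d) ∧
    ((∃ d' ∈ R, d' ≠ d) → ¬ Ileq (SL.https d) (bigJoin SL.https e es)) := by
  have host_le_pref : Cleq (SL.https d) (bigJoin SL.https e es) :=
    Cleq.le_bigJoin SL.https ((henum d).mpr hd)
  have pref_not_le_host : (∃ d' ∈ R, d' ≠ d) → ¬ Cleq (bigJoin SL.https e es) (SL.https d) := by
    rintro ⟨d', hd', hne⟩ hle
    exact hne (Cleq.https_https_iff.mp ((Cleq.le_bigJoin SL.https ((henum d').mpr hd')).trans hle))
  exact ⟨host_le_pref, pref_not_le_host, host_le_pref, pref_not_le_host⟩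
end

section
/- (HSTS does not decrease the integrity of Secure cookies.) Let R ⊆ 𝒟 be a nonempty finite set (the related domains of a domain d) and let S ⊆ R be a nonempty subset (the related domains on which HSTS is NOT enabled). Define L_hsts = (⋁_{d' ∈ S} http(d')) ∨ (⋁_{d' ∈ R} https(d')) (the integrity component of a Secure cookie for d when HSTS is enabled on R ∖ S) and L_sec = ⋁_{d' ∈ R} (http(d') ∨ https(d')) (the integrity component of a plain Secure cookie for d). Then L_hsts ⊑_C L_sec; equivalently, by contravariance of ⊑_I, L_sec ⊑_I L_hsts. -/
theorem joinList_le {D : Type*} {t : SL D} (a : SL D) (bs : List (SL D))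
    (h : ∀ l ∈ a :: bs, Cleq l t) : Cleq (joinList a bs) t := by
  induction bs generalizing a with
  | nil => exact h a List.mem_cons_self
  | cons b bs ih =>
    exact Cleq.joinLub (h a List.mem_cons_self)
      (ih b fun l hl => h l (List.mem_cons_of_mem a hl))

theorem le_joinList {D : Type*} {l : SL D} (a : SL D) (bs : List (SL D))
    (hl : l ∈ a :: bs) : Cleq l (joinList a bs) := by
  induction bs generalizing a with
  | nil =>
    rw [List.mem_singleton.mp hl]
    exact Cleq.refl a
  | cons b bs ih =>
    rcases List.mem_cons.mp hl with rfl | hl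
    · exact Cleq.joinLeft _ _
    · exact Cleq.trans (ih b hl) (Cleq.joinRight _ _)

theorem bigJoin_le {D : Type*} {t : SL D} (f : D → SL D) (d : D) (ds : List D)
    (h : ∀ x ∈ d :: ds, Cleq (f x) t) : Cleq (bigJoin f d ds) t := by
  refine joinList_le _ _ fun l hl => ?_
  obtain ⟨x, hx, rfl⟩ : ∃ x ∈ d :: ds, f x = l := by
    simpa only [← List.map_cons] using List.mem_map.mp hl
  exact h x hx

theorem le_bigJoin {D : Type*} (f : D → SL D) {x d : D} {ds : List D}
    (hx : x ∈ d :: ds) : Cleq (f x) (bigJoin f d ds) :=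
  le_joinList _ _ (by simpa only [← List.map_cons] using List.mem_map_of_mem hx)

theorem bigJoin_le_bigJoin {D : Type*} {f g : D → SL D} {d e : D} {ds es : List D}
    (hsub : ∀ x ∈ d :: ds, x ∈ e :: es) (hfg : ∀ x, Cleq (f x) (g x)) :
    Cleq (bigJoin f d ds) (bigJoin g e es) :=
  bigJoin_le f d ds fun x hx => Cleq.trans (hfg x) (le_bigJoin g (hsub x hx))

/-- HSTS does not decrease the integrity of Secure cookies: with S ⊆ R the
related domains where HSTS is NOT enabled,
L_hsts = (⋁_{d' ∈ S} http(d')) ∨ (⋁_{d' ∈ R} https(d')) satisfies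
L_hsts ⊑_C L_sec where L_sec = ⋁_{d' ∈ R} (http(d') ∨ https(d'));
equivalently, L_sec ⊑_I L_hsts. -/
theorem hsts_not_decrease_integrity {D : Type*}
    (R S : Finset D) (hSR : S ⊆ R)
    (eS : D) (esS : List D) (henumS : ∀ x : D, x ∈ eS :: esS ↔ x ∈ S)
    (eR : D) (esR : List D) (henumR : ∀ x : D, x ∈ eR :: esR ↔ x ∈ R) :
    Cleq (SL.join (bigJoin SL.http eS esS) (bigJoin SL.https eR esR))
         (bigJoin (fun d' => SL.join (SL.http d') (SL.https d')) eR esR) ∧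
    Ileq (bigJoin (fun d' => SL.join (SL.http d') (SL.https d')) eR esR)
         (SL.join (bigJoin SL.http eS esS) (bigJoin SL.https eR esR)) := by
  have hsts_le_sec :
      Cleq (SL.join (bigJoin SL.http eS esS) (bigJoin SL.https eR esR))
        (bigJoin (fun d' => SL.join (SL.http d') (SL.https d')) eR esR) := by
    refine Cleq.joinLub ?_ ?_
    · exact bigJoin_le_bigJoin (fun x hx => (henumR x).2 (hSR ((henumS x).1 hx)))
        fun _ => Cleq.joinLeft _ _
    · exact bigJoin_le_bigJoin (fun _ hx => hx) fun _ => Cleq.joinRight _ _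
  exact ⟨hsts_le_sec, hsts_le_sec⟩
end
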